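/- (Upper bound via modified double summation form.) λ_0 ≤ inf_{f ∈ F̃_{II}} sup_{i∈T\{0}} II_i(f)^{-1}, where F̃_{II} = {f > 0 : f_0 = 0 and there exists 1 ≤ n < N+1 with f_i = f_{i*} for all |i| ≥ n+1}. More precisely, for each such f, setting g_i = f_i II_i(f) for |i| ≤ n and g_i = g_{i*} for |i| ≥ n+1, one has D(g) = Σ_{k∈T\{0}} μ_k f_k g_k and hence λ_0 ≤ D(g)/μ(g²) ≤ sup_{k∈T\{0}} II_k(f)^{-1}. -/

import Mathlib

open Finset
open scoped Classical

structure BDTree (V : Type*) [Fintype V] where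
  root : V
  parent : V → V
  layer : V → ℕ
  q : V → V → ℝ
  parent_root : parent root = root
  layer_root : layer root = 0
  layer_parent : ∀ i, i ≠ root → layer i = layer (parent i) + 1
  reach : ∀ i, ∃ n, parent^[n] i = root
  q_pos_up : ∀ i, i ≠ root → 0 < q i (parent i)
  q_pos_down : ∀ i, i ≠ root → 0 < q (parent i) i

namespace BDTree

variable {V : Type*} [Fintype V] (T : BDTree V)

/-- The set of sons of a vertex. -/
noncomputable def sons (i : V) : Finset V :=
  Finset.univ.filter fun j => j ≠ T.root ∧ T.parent j = i

/-- The subtree `T_k` rooted at `k` (including `k`). -/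
noncomputable def subtree (k : V) : Finset V :=
  Finset.univ.filter fun j => ∃ n, T.parent^[n] j = k

/-- The path set `P(i)`: vertices (excluding the root) on the path from `i` to the root. -/
noncomputable def pathSet (i : V) : Finset V :=
  Finset.univ.filter fun k => k ≠ T.root ∧ ∃ n, T.parent^[n] i = k

/-- The symmetric measure `μ`. -/
noncomputable def mu (k : V) : ℝ :=
  ∏ j ∈ T.pathSet k, T.q (T.parent j) j / T.q j (T.parent j)

/-- The operator `Ω`. -/
noncomputable def Omega (g : V → ℝ) (i : V) : ℝ :=
  (∑ j ∈ T.sons i, T.q i j * (g j - g i)) + T.q i (T.parent i) * (g (T.parent i) - g i)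

/-- The set of non-root vertices `T \ {0}`. -/
noncomputable def nonroot : Finset V := Finset.univ.filter fun i => i ≠ T.root

/-- The Dirichlet form `D(f)`. -/
noncomputable def D (f : V → ℝ) : ℝ :=
  ∑ i ∈ T.nonroot, T.mu i * T.q i (T.parent i) * (f i - f (T.parent i)) ^ 2

/-- `μ(f²)`. -/
noncomputable def norm2 (f : V → ℝ) : ℝ := ∑ i ∈ T.nonroot, T.mu i * f i ^ 2

/-- The principal Dirichlet eigenvalue `λ₀`, via the classical variational formula. -/
noncomputable def lam0 : ℝ := sInf {r | ∃ f : V → ℝ, f T.root = 0 ∧ T.norm2 f = 1 ∧ r = T.D f}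

/-- The single-summation operator `I`. -/
noncomputable def opI (f : V → ℝ) (i : V) : ℝ :=
  (∑ j ∈ T.subtree i, T.mu j * f j) /
    (T.mu i * T.q i (T.parent i) * (f i - f (T.parent i)))

/-- The double-summation operator `II`. -/
noncomputable def opII (f : V → ℝ) (i : V) : ℝ :=
  (∑ k ∈ T.pathSet i, (1 / (T.mu k * T.q k (T.parent k))) *
      ∑ j ∈ T.subtree k, T.mu j * f j) / f i

/-- The difference-form operator `R`; at a son of the root the convention `w_0 = ∞`,
`1/∞ = 0` is used, i.e. the term `w i⁻¹` is replaced by `0`. -/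
noncomputable def R (w : V → ℝ) (i : V) : ℝ :=
  T.q i (T.parent i) * (1 - (if T.parent i = T.root then 0 else (w i)⁻¹)) +
    ∑ j ∈ T.sons i, T.q i j * (1 - w j)

/-- Membership in the test-function class `W = {w : w > 1, w_0 = ∞}` (the value at a son
of the root plays the role of `∞` and is not used by `R`). -/
def memW (w : V → ℝ) : Prop := ∀ i, i ≠ T.root → T.parent i ≠ T.root → 1 < w i

/-- `φ_j = Σ_{k∈P(j)} 1/(μ_k q_{kk*})`. -/
noncomputable def phi (j : V) : ℝ :=
  ∑ k ∈ T.pathSet j, 1 / (T.mu k * T.q k (T.parent k))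

end BDTree


/-! With `c_l = (∑_{j ∈ T_l} μ_j f_j) / (μ_l q_{l l*})` we have `f_i II_i(f) = ∑_{l ∈ P(i)} c_l`,
so the modified function is the truncated path sum `g_k = ∑_{l ∈ P(k), |l| ≤ n} c_l` and
`g_k - g_{k*}` is `c_k` for `|k| ≤ n` and `0` beyond. Hence
`D(g) = ∑_{|l| ≤ n} μ_l q_{l l*} c_l² = ∑_{|l| ≤ n} c_l ∑_{j ∈ T_l} μ_j f_j`, which is
`∑_k μ_k f_k g_k` after exchanging the two sums. As `f` and `g` are constant above layer `n`,
`f_k / g_k = II_a(f)⁻¹` for the ancestor `a` of `k` at layer `min(|k|, n)`, which bounds the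
Rayleigh quotient of `g` by `sup II⁻¹`. -/

namespace BDTree

variable {V : Type*} [Fintype V] (T : BDTree V)

section Tree

lemma layer_parent_eq_sub_one (i : V) : T.layer (T.parent i) = T.layer i - 1 := by
  by_cases hi : i = T.root
  · rw [hi, T.parent_root, T.layer_root]
  · rw [T.layer_parent i hi]; omega

lemma layer_iterate_parent (m : ℕ) (i : V) : T.layer (T.parent^[m] i) = T.layer i - m := by
  induction m with
  | zero => rfl
  | succ m ih => rw [Function.iterate_succ_apply', layer_parent_eq_sub_one, ih]; omega

lemma layer_eq_zero_iff {i : V} : T.layer i = 0 ↔ i = T.root := by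
  refine ⟨fun h => ?_, fun h => h ▸ T.layer_root⟩
  by_contra hi
  have := T.layer_parent i hi
  omega

lemma iterate_parent_ne_root {k : V} {m : ℕ} (hm : m < T.layer k) :
    T.parent^[m] k ≠ T.root := by
  rw [Ne, ← T.layer_eq_zero_iff, layer_iterate_parent]
  omega

lemma mem_pathSet {i k : V} : k ∈ T.pathSet i ↔ k ≠ T.root ∧ ∃ m, T.parent^[m] i = k := by
  simp [pathSet]

lemma mem_pathSet_self {i : V} (hi : i ≠ T.root) : i ∈ T.pathSet i :=
  T.mem_pathSet.mpr ⟨hi, 0, rfl⟩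

lemma iterate_parent_mem_pathSet {k : V} {m : ℕ} (hm : m < T.layer k) :
    T.parent^[m] k ∈ T.pathSet k :=
  T.mem_pathSet.mpr ⟨T.iterate_parent_ne_root hm, m, rfl⟩

lemma ne_root_of_mem_pathSet {i k : V} (hk : k ∈ T.pathSet i) : k ≠ T.root :=
  (T.mem_pathSet.mp hk).1

lemma layer_le_of_mem_pathSet {i k : V} (hk : k ∈ T.pathSet i) : T.layer k ≤ T.layer i := by
  obtain ⟨_, m, rfl⟩ := T.mem_pathSet.mp hk
  rw [layer_iterate_parent]
  omega

lemma pathSet_root : T.pathSet T.root = ∅ := by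
  ext k
  simp only [mem_pathSet, Function.iterate_fixed T.parent_root, Finset.notMem_empty, iff_false,
    not_and, not_exists]
  exact fun hk _ h => hk h.symm

lemma pathSet_eq_insert {i : V} (hi : i ≠ T.root) :
    T.pathSet i = insert i (T.pathSet (T.parent i)) := by
  ext k
  simp only [mem_pathSet, Finset.mem_insert]
  constructor
  · rintro ⟨hk, _ | m, hm⟩
    · exact Or.inl hm.symm
    · exact Or.inr ⟨hk, m, hm⟩
  · rintro (rfl | ⟨hk, m, hm⟩)
    · exact ⟨hi, 0, rfl⟩
    · exact ⟨hk, m + 1, hm⟩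

lemma notMem_pathSet_parent {i : V} (hi : i ≠ T.root) : i ∉ T.pathSet (T.parent i) := by
  intro h
  have hlayer := T.layer_le_of_mem_pathSet h
  rw [layer_parent_eq_sub_one] at hlayer
  have := T.layer_eq_zero_iff.not.mpr hi
  omega

lemma mem_subtree_iff {l : V} (hl : l ≠ T.root) {k : V} : k ∈ T.subtree l ↔ l ∈ T.pathSet k := by
  simp [subtree, pathSet, hl]

lemma ne_root_of_mem_subtree {l j : V} (hl : l ≠ T.root) (hj : j ∈ T.subtree l) :
    j ≠ T.root := by
  rintro rfl
  rw [mem_subtree_iff T hl, pathSet_root] at hj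
  exact Finset.notMem_empty _ hj

lemma mem_nonroot {i : V} : i ∈ T.nonroot ↔ i ≠ T.root := by
  simp [nonroot]

lemma mu_pos (k : V) : 0 < T.mu k :=
  Finset.prod_pos fun j hj =>
    div_pos (T.q_pos_down j (T.ne_root_of_mem_pathSet hj)) (T.q_pos_up j (T.ne_root_of_mem_pathSet hj))

lemma apply_iterate_parent_eq {α : Type*} {h : V → α} {n : ℕ}
    (hh : ∀ i, n + 1 ≤ T.layer i → h i = h (T.parent i)) (k : V) {m : ℕ}
    (hm : m ≤ T.layer k - n) : h (T.parent^[m] k) = h k := by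
  induction m with
  | zero => rfl
  | succ m ih =>
    rw [Function.iterate_succ_apply', ← hh _ (by rw [layer_iterate_parent]; omega), ih (by omega)]

end Tree

section RayleighQuotient

lemma D_nonneg (g : V → ℝ) : 0 ≤ T.D g :=
  Finset.sum_nonneg fun i hi =>
    mul_nonneg (mul_pos (T.mu_pos i) (T.q_pos_up i (T.mem_nonroot.mp hi))).le (sq_nonneg _)

lemma D_const_mul (c : ℝ) (g : V → ℝ) : T.D (fun i => c * g i) = c ^ 2 * T.D g := by
  rw [D, D, Finset.mul_sum]
  exact Finset.sum_congr rfl fun i _ => by ring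

lemma norm2_const_mul (c : ℝ) (g : V → ℝ) :
    T.norm2 (fun i => c * g i) = c ^ 2 * T.norm2 g := by
  rw [norm2, norm2, Finset.mul_sum]
  exact Finset.sum_congr rfl fun i _ => by ring

lemma norm2_pos (hne : T.nonroot.Nonempty) {g : V → ℝ} (hg : ∀ k, k ≠ T.root → 0 < g k) :
    0 < T.norm2 g :=
  Finset.sum_pos (fun k hk => mul_pos (T.mu_pos k) (pow_pos (hg k (T.mem_nonroot.mp hk)) 2)) hne

lemma lam0_le_D_div_norm2 {g : V → ℝ} (hg0 : g T.root = 0) (hg : 0 < T.norm2 g) :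
    T.lam0 ≤ T.D g / T.norm2 g := by
  set c := (Real.sqrt (T.norm2 g))⁻¹
  have hc : c ^ 2 = (T.norm2 g)⁻¹ := by rw [inv_pow, Real.sq_sqrt hg.le]
  refine csInf_le ⟨0, ?_⟩ ⟨fun i => c * g i, by simp [hg0], ?_, ?_⟩
  · rintro r ⟨h, -, -, rfl⟩
    exact T.D_nonneg h
  · rw [norm2_const_mul, hc, inv_mul_cancel₀ hg.ne']
  · rw [D_const_mul, hc, div_eq_inv_mul]

lemma D_div_norm2_le {a g : V → ℝ} {M : ℝ} (hD : T.D g = ∑ k ∈ T.nonroot, T.mu k * a k * g k)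
    (hg : 0 < T.norm2 g) (h : ∀ k ∈ T.nonroot, a k * g k ≤ M * g k ^ 2) :
    T.D g / T.norm2 g ≤ M := by
  rw [div_le_iff₀ hg, hD, norm2, Finset.mul_sum]
  refine Finset.sum_le_sum fun k hk => ?_
  calc T.mu k * a k * g k = T.mu k * (a k * g k) := mul_assoc _ _ _
    _ ≤ T.mu k * (M * g k ^ 2) := mul_le_mul_of_nonneg_left (h k hk) (T.mu_pos k).le
    _ = M * (T.mu k * g k ^ 2) := by ring

end RayleighQuotient

section PathSums

variable {p : V → Prop} [DecidablePred p] {c g : V → ℝ}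

lemma sub_parent_of_eq_sum_pathSet (hg : ∀ k, g k = ∑ l ∈ (T.pathSet k).filter p, c l)
    {k : V} (hk : k ≠ T.root) : g k - g (T.parent k) = if p k then c k else 0 := by
  rw [hg, hg, T.pathSet_eq_insert hk, Finset.filter_insert]
  split_ifs
  · rw [Finset.sum_insert fun h => T.notMem_pathSet_parent hk (Finset.mem_of_mem_filter _ h)]
    ring
  · ring

lemma D_eq_of_eq_sum_pathSet (hg : ∀ k, g k = ∑ l ∈ (T.pathSet k).filter p, c l) :
    T.D g = ∑ l ∈ T.nonroot.filter p, T.mu l * T.q l (T.parent l) * c l ^ 2 := by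
  rw [Finset.sum_filter, D]
  refine Finset.sum_congr rfl fun l hl => ?_
  rw [T.sub_parent_of_eq_sum_pathSet hg (T.mem_nonroot.mp hl)]
  split_ifs <;> ring

lemma sum_mul_sum_pathSet_filter (a c : V → ℝ) :
    ∑ k ∈ T.nonroot, a k * ∑ l ∈ (T.pathSet k).filter p, c l =
      ∑ l ∈ T.nonroot.filter p, c l * ∑ j ∈ T.subtree l, a j := by
  simp_rw [Finset.mul_sum]
  rw [Finset.sum_comm' (t' := T.nonroot.filter p) (s' := T.subtree)]
  · exact Finset.sum_congr rfl fun l _ => Finset.sum_congr rfl fun j _ => mul_comm _ _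
  · intro k l
    simp only [Finset.mem_filter, mem_nonroot]
    constructor
    · rintro ⟨-, hl, hpl⟩
      have hl' := T.ne_root_of_mem_pathSet hl
      exact ⟨(T.mem_subtree_iff hl').mpr hl, hl', hpl⟩
    · rintro ⟨hk, hl, hpl⟩
      exact ⟨T.ne_root_of_mem_subtree hl hk, (T.mem_subtree_iff hl).mp hk, hpl⟩

end PathSums

section DoubleSum

noncomputable def opIITerm (f : V → ℝ) (k : V) : ℝ :=
  (∑ j ∈ T.subtree k, T.mu j * f j) / (T.mu k * T.q k (T.parent k))

lemma opII_eq_sum_opIITerm (f : V → ℝ) (i : V) :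
    T.opII f i = (∑ k ∈ T.pathSet i, T.opIITerm f k) / f i := by
  simp only [opII, opIITerm, one_div_mul_eq_div]

variable {f : V → ℝ}

lemma opIITerm_pos (hf : ∀ i, i ≠ T.root → 0 < f i) {k : V} (hk : k ≠ T.root) :
    0 < T.opIITerm f k := by
  have hmass : 0 < ∑ j ∈ T.subtree k, T.mu j * f j :=
    Finset.sum_pos'
      (fun j hj => (mul_pos (T.mu_pos j) (hf j (T.ne_root_of_mem_subtree hk hj))).le)
      ⟨k, (T.mem_subtree_iff hk).mpr (T.mem_pathSet_self hk), mul_pos (T.mu_pos k) (hf k hk)⟩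
  exact div_pos hmass (mul_pos (T.mu_pos k) (T.q_pos_up k hk))

lemma opII_pos (hf : ∀ i, i ≠ T.root → 0 < f i) {k : V} (hk : k ≠ T.root) :
    0 < T.opII f k := by
  rw [opII_eq_sum_opIITerm]
  refine div_pos (Finset.sum_pos (fun l hl => ?_) ⟨k, T.mem_pathSet_self hk⟩) (hf k hk)
  exact T.opIITerm_pos hf (T.ne_root_of_mem_pathSet hl)

lemma mul_opII (hf0 : f T.root = 0) (hf : ∀ i, i ≠ T.root → f i ≠ 0) (k : V) :
    f k * T.opII f k = ∑ l ∈ T.pathSet k, T.opIITerm f l := by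
  by_cases hk : k = T.root
  · rw [hk, hf0, zero_mul, pathSet_root, Finset.sum_empty]
  · rw [opII_eq_sum_opIITerm, mul_div_cancel₀ _ (hf k hk)]

lemma D_eq_sum_mu_mul_mul {p : V → Prop} [DecidablePred p] {g : V → ℝ}
    (hg : ∀ k, g k = ∑ l ∈ (T.pathSet k).filter p, T.opIITerm f l) :
    T.D g = ∑ k ∈ T.nonroot, T.mu k * f k * g k := by
  calc T.D g = ∑ l ∈ T.nonroot.filter p, T.opIITerm f l * ∑ j ∈ T.subtree l, T.mu j * f j := by
        rw [T.D_eq_of_eq_sum_pathSet hg]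
        refine Finset.sum_congr rfl fun l hl => ?_
        have hl' := T.mem_nonroot.mp (Finset.mem_filter.mp hl).1
        have := T.mu_pos l
        have := T.q_pos_up l hl'
        rw [opIITerm]
        field_simp
    _ = ∑ k ∈ T.nonroot, T.mu k * f k * g k := by
        simp_rw [hg]
        exact (T.sum_mul_sum_pathSet_filter _ _).symm

end DoubleSum

section Truncation

variable {n : ℕ}

lemma eq_sum_pathSet_filter_layer_le {c g : V → ℝ}
    (h1 : ∀ k, T.layer k ≤ n → g k = ∑ l ∈ T.pathSet k, c l)
    (h2 : ∀ k, n + 1 ≤ T.layer k → g k = g (T.parent k)) (k : V) :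
    g k = ∑ l ∈ (T.pathSet k).filter (fun l => T.layer l ≤ n), c l := by
  by_cases hkn : T.layer k ≤ n
  · rw [h1 k hkn,
      Finset.filter_true_of_mem fun l hl => (T.layer_le_of_mem_pathSet hl).trans hkn]
  · have hk : k ≠ T.root := fun h => hkn (by simp [h, T.layer_root])
    have := T.layer_parent k hk
    rw [h2 k (by omega), eq_sum_pathSet_filter_layer_le h1 h2 (T.parent k),
      T.pathSet_eq_insert hk, Finset.filter_insert, if_neg hkn]
termination_by T.layer k

lemma sum_pathSet_filter_layer_le_pos {c : V → ℝ} (hc : ∀ l, l ≠ T.root → 0 < c l) (hn : 1 ≤ n)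
    {k : V} (hk : k ≠ T.root) :
    0 < ∑ l ∈ (T.pathSet k).filter (fun l => T.layer l ≤ n), c l := by
  have hk' := T.layer_eq_zero_iff.not.mpr hk
  refine Finset.sum_pos (fun l hl => hc l (T.ne_root_of_mem_pathSet (Finset.mem_filter.mp hl).1))
    ⟨T.parent^[T.layer k - n] k, Finset.mem_filter.mpr ⟨?_, ?_⟩⟩
  · exact T.iterate_parent_mem_pathSet (by omega)
  · rw [layer_iterate_parent]
    omega

end Truncation

end BDTree

/-- upper bound via the modified double summation form. -/
theorem stmt8 {V : Type*} [Fintype V] (T : BDTree V) (hne : T.nonroot.Nonempty)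
    (f : V → ℝ) (hf0 : f T.root = 0) (hfpos : ∀ i, i ≠ T.root → 0 < f i)
    (n : ℕ) (hn : 1 ≤ n) (hfn : ∀ i, n + 1 ≤ T.layer i → f i = f (T.parent i))
    (g : V → ℝ)
    (hg1 : ∀ i, T.layer i ≤ n → g i = f i * T.opII f i)
    (hg2 : ∀ i, n + 1 ≤ T.layer i → g i = g (T.parent i)) :
    T.D g = (∑ k ∈ T.nonroot, T.mu k * f k * g k) ∧
    T.lam0 ≤ T.D g / T.norm2 g ∧
    T.D g / T.norm2 g ≤ (T.nonroot.sup' hne fun k => (T.opII f k)⁻¹) ∧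
    T.lam0 ≤ T.nonroot.sup' hne fun k => (T.opII f k)⁻¹ := by
  have hg : ∀ k, g k = ∑ l ∈ (T.pathSet k).filter (fun l => T.layer l ≤ n), T.opIITerm f l :=
    T.eq_sum_pathSet_filter_layer_le
      (fun k hk => (hg1 k hk).trans (T.mul_opII hf0 (fun i hi => (hfpos i hi).ne') k)) hg2
  have hnorm : 0 < T.norm2 g := T.norm2_pos hne fun k hk =>
    (hg k).symm ▸ T.sum_pathSet_filter_layer_le_pos (fun l hl => T.opIITerm_pos hfpos hl) hn hk
  have hD := T.D_eq_sum_mu_mul_mul hg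
  have hbound : T.D g / T.norm2 g ≤ T.nonroot.sup' hne fun k => (T.opII f k)⁻¹ := by
    refine T.D_div_norm2_le hD hnorm fun k hk => ?_
    set a := T.parent^[T.layer k - n] k
    have hk := T.layer_eq_zero_iff.not.mpr (T.mem_nonroot.mp hk)
    have ha : a ≠ T.root := T.iterate_parent_ne_root (by omega)
    have hII := T.opII_pos hfpos ha
    rw [← T.apply_iterate_parent_eq hfn k le_rfl, ← T.apply_iterate_parent_eq hg2 k le_rfl,
      hg1 a (by rw [T.layer_iterate_parent]; omega)]
    calc f a * (f a * T.opII f a) = (T.opII f a)⁻¹ * (f a * T.opII f a) ^ 2 := by field_simp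
      _ ≤ _ := mul_le_mul_of_nonneg_right
          (Finset.le_sup' (fun k => (T.opII f k)⁻¹) (T.mem_nonroot.mpr ha)) (sq_nonneg _)
  have hlam := T.lam0_le_D_div_norm2 (by rw [hg, T.pathSet_root]; rfl) hnorm
  exact ⟨hD, hlam, hbound, hlam.trans hbound⟩
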